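/- arXiv:1912.07891 — 5 statements merged into one kernel-verified Lean document; each statement's English description precedes it below -/
import Mathlib

section
/- If 0 < β < 1 < α and αβ < 1, then there exists a unique κ > 0 such that α^κ + β^κ = 2. -/
/-!
The function `f s = α ^ s + β ^ s` satisfies `f 0 = 2`, has derivative `log (α β) < 0` at `0`
and tends to infinity, so by the intermediate value theorem it takes the value `2` again at some
`κ > 0`. It is strictly convex, so it cannot take the value `f 0` at two points to the right of `0`.
-/

open Real Filter Topology Set

theorem strictConvexOn_rpow_left {b : ℝ} (hb₀ : 0 < b) (hb₁ : b ≠ 1) :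
    StrictConvexOn ℝ univ fun x : ℝ => b ^ x := by
  refine ⟨convex_univ, fun x _ y _ hxy a c ha hc hac => ?_⟩
  have hlog : log b ≠ 0 := log_ne_zero_of_pos_of_ne_one hb₀ hb₁
  have key := strictConvexOn_exp.2 (mem_univ (log b * x)) (mem_univ (log b * y))
    (by simpa [hlog] using hxy) ha hc hac
  simp only [smul_eq_mul, rpow_def_of_pos hb₀] at key ⊢
  convert key using 2
  ring

theorem StrictConvexOn.lt_of_lt_of_lt_of_apply_eq {s : Set ℝ} {f : ℝ → ℝ}
    (hf : StrictConvexOn ℝ s f) {x y z : ℝ} (hx : x ∈ s) (hz : z ∈ s) (hxy : x < y) (hyz : y < z)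
    (hfz : f z = f x) : f y < f x := by
  have := hf.lt_on_openSegment hx hz (hxy.trans hyz).ne
    (by rw [openSegment_eq_Ioo (hxy.trans hyz)]; exact ⟨hxy, hyz⟩)
  rwa [hfz, max_self] at this

theorem StrictConvexOn.eq_of_lt_of_lt_of_apply_eq {s : Set ℝ} {f : ℝ → ℝ}
    (hf : StrictConvexOn ℝ s f) {x y z : ℝ} (hx : x ∈ s) (hy : y ∈ s) (hz : z ∈ s)
    (hxy : x < y) (hxz : x < z) (hfy : f y = f x) (hfz : f z = f x) : y = z := by
  rcases lt_trichotomy y z with h | h | h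
  · exact absurd hfy (hf.lt_of_lt_of_lt_of_apply_eq hx hz hxy h hfz).ne
  · exact h
  · exact absurd hfz (hf.lt_of_lt_of_lt_of_apply_eq hx hy hxz h hfy).ne

theorem HasDerivAt.eventually_nhdsGT_lt {f : ℝ → ℝ} {f' x : ℝ} (hf : HasDerivAt f f' x)
    (hf' : f' < 0) : ∀ᶠ y in 𝓝[>] x, f y < f x := by
  have hslope := (hasDerivAt_iff_tendsto_slope.1 hf).mono_left (nhdsGT_le_nhdsNE x)
  filter_upwards [hslope.eventually (eventually_lt_nhds hf'), self_mem_nhdsWithin]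
    with y hy (hxy : x < y)
  rwa [slope_def_field, div_lt_iff₀ (sub_pos.2 hxy), zero_mul, sub_neg] at hy

theorem exists_gt_apply_eq_of_hasDerivAt_neg {f : ℝ → ℝ} {f' x : ℝ} (hcont : Continuous f)
    (hf : HasDerivAt f f' x) (hf' : f' < 0) (htop : Tendsto f atTop atTop) :
    ∃ y, x < y ∧ f y = f x := by
  obtain ⟨a, hfa, hxa⟩ := ((hf.eventually_nhdsGT_lt hf').and self_mem_nhdsWithin).exists
  obtain ⟨b, hfb, hab⟩ := ((htop.eventually_gt_atTop (f x)).and (eventually_ge_atTop a)).exists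
  obtain ⟨y, hy, hfy⟩ :=
    intermediate_value_Icc hab hcont.continuousOn ⟨hfa.le, hfb.le⟩
  exact ⟨y, lt_of_lt_of_le hxa hy.1, hfy⟩

theorem StrictConvexOn.existsUnique_gt_apply_eq {f : ℝ → ℝ} {f' x : ℝ}
    (hconv : StrictConvexOn ℝ univ f) (hcont : Continuous f) (hf : HasDerivAt f f' x)
    (hf' : f' < 0) (htop : Tendsto f atTop atTop) : ∃! y, x < y ∧ f y = f x := by
  obtain ⟨y, hxy, hfy⟩ := exists_gt_apply_eq_of_hasDerivAt_neg hcont hf hf' htop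
  exact ⟨y, ⟨hxy, hfy⟩, fun z ⟨hxz, hfz⟩ =>
    hconv.eq_of_lt_of_lt_of_apply_eq trivial trivial trivial hxz hxy hfz hfy⟩

theorem stmt_1_general (α β : ℝ) (hβ0 : 0 < β) (hα : 1 < α) (hαβ : α * β < 1) :
    ∃! κ : ℝ, 0 < κ ∧ α ^ κ + β ^ κ = 2 := by
  have hα0 : 0 < α := one_pos.trans hα
  have hconv : StrictConvexOn ℝ univ fun s : ℝ => α ^ s + β ^ s :=
    (strictConvexOn_rpow_left hα0 hα.ne').add_convexOn (convexOn_rpow_left hβ0)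
  have hcont : Continuous fun s : ℝ => α ^ s + β ^ s :=
    (continuous_const_rpow hα0.ne').add (continuous_const_rpow hβ0.ne')
  have hderiv : HasDerivAt (fun s : ℝ => α ^ s + β ^ s) (log (α * β)) 0 := by
    have := ((hasStrictDerivAt_const_rpow hα0 0).add
      (hasStrictDerivAt_const_rpow hβ0 0)).hasDerivAt
    rwa [rpow_zero, rpow_zero, one_mul, one_mul, ← log_mul hα0.ne' hβ0.ne'] at this
  have htop : Tendsto (fun s : ℝ => α ^ s + β ^ s) atTop atTop :=
    tendsto_atTop_mono (fun s => le_add_of_nonneg_right (rpow_nonneg hβ0.le s))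
      (tendsto_rpow_atTop_of_base_gt_one α hα)
  have hf0 : α ^ (0 : ℝ) + β ^ (0 : ℝ) = 2 := by norm_num
  simpa only [hf0] using
    hconv.existsUnique_gt_apply_eq hcont hderiv (log_neg (by positivity) hαβ) htop

/-- If `0 < β < 1 < α` and `αβ < 1`, then there is a unique `κ > 0` with `α^κ + β^κ = 2`. -/
theorem stmt_1 (α β : ℝ) (hβ0 : 0 < β) (hβ1 : β < 1) (hα : 1 < α) (hαβ : α * β < 1) :
    ∃! κ : ℝ, 0 < κ ∧ α ^ κ + β ^ κ = 2 :=
  stmt_1_general α β hβ0 hα hαβ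
end

section
/- Let 0 < β ≤ α < 1 and Y_n the stable random-coefficient AR process. For any integer ℓ ≥ 0 and a > 0, P(Y_n ≥ a and θ_n = α, …, θ_{n-ℓ} = α) ≥ 2^{-(ℓ+1)} P(N(0, u_ℓ²) ≥ a), where u_ℓ² = Σ_{k=0}^ℓ α^{2k}. -/
open MeasureTheory ProbabilityTheory
open scoped ENNReal NNReal

/-!
Conditionally on the environment `θ`, `Y_n = ∑ₖ (∏_{j > k} θ_j) ε_k` is a centred Gaussian of
variance `∑ₖ ∏_{j > k} θ_j²`, and on the event `θ_{n-ℓ} = ⋯ = θ_n = α` this variance is at least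
`u_ℓ²`. For `a > 0` the tail `P(N(0, v) ≥ a)` increases with `v`, so every such environment gives
`Y_n ≥ a` conditional probability at least `P(N(0, u_ℓ²) ≥ a)`. Since `θ` and `ε` are independent,
integrating this bound over the event, whose probability is at least `2^{-(ℓ+1)}`, gives the claim.
-/

lemma sum_range_pow_le_sum_sq_prod {R : Type*} [CommRing R] [LinearOrder R]
    [IsStrictOrderedRing R]
    {α : R} {t : ℕ → R} {n ℓ : ℕ} (hℓ : ℓ < n) (ht : ∀ j ∈ Finset.Icc (n - ℓ) n, t j = α) :
    ∑ i ∈ Finset.range (ℓ + 1), α ^ (2 * i) ≤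
      ∑ k ∈ Finset.Icc 1 n, (∏ j ∈ Finset.Icc (k + 1) n, t j) ^ 2 := by
  have hprod : ∀ i ∈ Finset.range (ℓ + 1), ∏ j ∈ Finset.Icc (n - i + 1) n, t j = α ^ i := by
    intro i hi
    rw [Finset.mem_range] at hi
    rw [Finset.prod_congr rfl fun j hj ↦ ht j (by simp only [Finset.mem_Icc] at hj ⊢; omega),
      Finset.prod_const, Nat.card_Icc, show n + 1 - (n - i + 1) = i by omega]
  calc ∑ i ∈ Finset.range (ℓ + 1), α ^ (2 * i)
      = ∑ i ∈ Finset.range (ℓ + 1), (∏ j ∈ Finset.Icc (n - i + 1) n, t j) ^ 2 :=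
        Finset.sum_congr rfl fun i hi ↦ by rw [hprod i hi, ← pow_mul, mul_comm]
    _ = ∑ k ∈ (Finset.range (ℓ + 1)).image (n - ·), (∏ j ∈ Finset.Icc (k + 1) n, t j) ^ 2 := by
        rw [Finset.sum_image fun i hi i' hi' h ↦ by
          simp only [Finset.coe_range, Set.mem_Iio] at hi hi'; omega]
    _ ≤ ∑ k ∈ Finset.Icc 1 n, (∏ j ∈ Finset.Icc (k + 1) n, t j) ^ 2 :=
        Finset.sum_le_sum_of_subset_of_nonneg
          (fun k hk ↦ by
            simp only [Finset.mem_image, Finset.mem_range, Finset.mem_Icc] at hk ⊢; omega)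
          fun _ _ _ ↦ sq_nonneg _

section Probability

variable {Ω : Type*} {mΩ : MeasurableSpace Ω} {μ : Measure Ω}

lemma ProbabilityTheory.iIndepFun.indepFun_sumElim {ι κ β : Type*} [MeasurableSpace β]
    {f : ι → Ω → β} {g : κ → Ω → β} (h : iIndepFun (Sum.elim f g) μ)
    (hf : ∀ i, Measurable (f i)) (hg : ∀ k, Measurable (g k)) :
    IndepFun (fun ω i ↦ f i ω) (fun ω k ↦ g k ω) μ := by
  have hle : ∀ i, MeasurableSpace.comap (Sum.elim f g i) inferInstance ≤ mΩ := by
    rintro (i | k)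
    exacts [(hf i).comap_le, (hg k).comap_le]
  have := indep_iSup_of_disjoint hle h.iIndep (S := Set.range Sum.inl) (T := Set.range Sum.inr)
    Set.isCompl_range_inl_range_inr.disjoint
  rw [IndepFun_iff_Indep, MeasurableSpace.comap_process_pi, MeasurableSpace.comap_process_pi]
  simpa only [iSup_range, Sum.elim_inl, Sum.elim_inr] using this

lemma ProbabilityTheory.IndepFun.mul_le_measure_of_forall_le {S T : Type*} [MeasurableSpace S]
    [MeasurableSpace T] [IsFiniteMeasure μ] {X : Ω → S} {E : Ω → T} (hXE : IndepFun X E μ)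
    (hX : Measurable X) (hE : Measurable E) {B : Set S} (hB : MeasurableSet B)
    {D : Set (S × T)} (hD : MeasurableSet D) {q : ℝ≥0∞}
    (hq : ∀ x ∈ B, q ≤ μ {ω | (x, E ω) ∈ D}) :
    μ (X ⁻¹' B) * q ≤ μ {ω | X ω ∈ B ∧ (X ω, E ω) ∈ D} := by
  have hBD : MeasurableSet (B ×ˢ Set.univ ∩ D) := (hB.prod .univ).inter hD
  calc μ (X ⁻¹' B) * q = ∫⁻ x, B.indicator (fun _ ↦ q) x ∂μ.map X := by
        rw [lintegral_indicator_const hB, Measure.map_apply hX hB, mul_comm]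
    _ ≤ ∫⁻ x, μ.map E (Prod.mk x ⁻¹' (B ×ˢ Set.univ ∩ D)) ∂μ.map X := by
        refine lintegral_mono fun x ↦ ?_
        by_cases hx : x ∈ B
        · rw [Set.indicator_of_mem hx, Measure.map_apply hE (measurable_prodMk_left hBD)]
          simpa [Set.preimage, hx] using hq x hx
        · simp [hx]
    _ = μ {ω | X ω ∈ B ∧ (X ω, E ω) ∈ D} := by
        rw [← Measure.prod_apply hBD, ← hXE.map_prod_eq_prod_map_map hX.aemeasurable
          hE.aemeasurable, Measure.map_apply (hX.prodMk hE) hBD]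
        congr 1
        ext ω
        simp

lemma ProbabilityTheory.iIndepFun.pow_card_le_measure_forall_eq {ι β : Type*}
    [MeasurableSpace β] [MeasurableSingletonClass β]
    {θ : ι → Ω → β} (h : iIndepFun θ μ) {s : Finset ι} {b : β} {p : ℝ≥0∞}
    (hp : ∀ i ∈ s, p ≤ μ (θ i ⁻¹' {b})) :
    p ^ s.card ≤ μ {ω | ∀ i ∈ s, θ i ω = b} := by
  have hinter : {ω | ∀ i ∈ s, θ i ω = b} = ⋂ i ∈ s, θ i ⁻¹' {b} := by ext; simp
  rw [hinter, h.meas_biInter fun i _ ↦ ⟨{b}, measurableSet_singleton b, rfl⟩]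
  exact Finset.pow_card_le_prod s _ p hp

lemma ProbabilityTheory.iIndepFun.map_sum_mul_eq_gaussianReal [IsProbabilityMeasure μ]
    {ι : Type*} {ε : ι → Ω → ℝ} (h : iIndepFun ε μ) (hmeas : ∀ i, Measurable (ε i))
    (c : ι → ℝ) (s : Finset ι) (hlaw : ∀ i ∈ s, μ.map (ε i) = gaussianReal 0 1) :
    μ.map (fun ω ↦ ∑ i ∈ s, c i * ε i ω) = gaussianReal 0 (∑ i ∈ s, c i ^ 2).toNNReal := by
  classical
  induction s using Finset.induction_on with
  | empty => simp [gaussianReal_zero_var]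
  | @insert j s hj ih =>
    have hcε : iIndepFun (fun i ω ↦ c i * ε i ω) μ := h.comp (fun i x ↦ c i * x) (by fun_prop)
    have hind : IndepFun (fun ω ↦ ∑ i ∈ s, c i * ε i ω) (fun ω ↦ c j * ε j ω) μ := by
      have := hcε.indepFun_finsetSum_of_notMem (fun i ↦ (hmeas i).const_mul (c i)) hj
      rwa [Finset.sum_fn] at this
    have hlawj : μ.map (fun ω ↦ c j * ε j ω) = gaussianReal 0 (c j ^ 2).toNNReal := by
      rw [show (fun ω ↦ c j * ε j ω) = (c j * ·) ∘ ε j from rfl,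
        ← Measure.map_map (by fun_prop) (hmeas j), hlaw j (s.mem_insert_self j),
        gaussianReal_map_const_mul]
      congr 1
      · ring
      · ext; simp [sq_nonneg]
    have hsum := gaussianReal_add_gaussianReal_of_indepFun hind
      (ih fun i hi ↦ hlaw i (Finset.mem_insert_of_mem hi)) hlawj
    convert hsum using 2
    · ext ω
      simp [Finset.sum_insert hj, add_comm]
    · simp
    · rw [Finset.sum_insert hj, add_comm, Real.toNNReal_add (by positivity) (by positivity)]

lemma gaussianReal_Ici_mono {u v : ℝ≥0} (huv : u ≤ v) {a : ℝ} (ha : 0 < a) :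
    gaussianReal 0 u (Set.Ici a) ≤ gaussianReal 0 v (Set.Ici a) := by
  rcases eq_or_ne u 0 with rfl | hu
  · simp [gaussianReal_zero_var, ha.not_ge]
  set c : ℝ := √(v / u)
  have hc : 1 ≤ c := Real.one_le_sqrt.mpr <| (one_le_div₀ (by positivity)).mpr huv
  have hscale : gaussianReal 0 v = (gaussianReal 0 u).map (c * ·) := by
    rw [gaussianReal_map_const_mul, mul_zero]
    congr 1
    ext
    simp only [NNReal.coe_mul, NNReal.coe_mk, c]
    rw [Real.sq_sqrt (by positivity), div_mul_cancel₀ _ (by positivity)]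
  rw [hscale, Measure.map_apply (by fun_prop) measurableSet_Ici]
  exact measure_mono fun x (hx : a ≤ x) ↦
    show a ≤ c * x by nlinarith

lemma gaussianReal_Ici_le_measure_sum_prod_mul [IsProbabilityMeasure μ] {ε : ℕ → Ω → ℝ}
    (hε : iIndepFun ε μ) (hεmeas : ∀ k, Measurable (ε k))
    (hεlaw : ∀ k, 1 ≤ k → μ.map (ε k) = gaussianReal 0 1)
    {α a : ℝ} {t : ℕ → ℝ} {n ℓ : ℕ} (hℓ : ℓ < n) (ha : 0 < a)
    (ht : ∀ j ∈ Finset.Icc (n - ℓ) n, t j = α) :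
    gaussianReal 0 (∑ i ∈ Finset.range (ℓ + 1), α ^ (2 * i)).toNNReal (Set.Ici a) ≤
      μ {ω | a ≤ ∑ k ∈ Finset.Icc 1 n, (∏ j ∈ Finset.Icc (k + 1) n, t j) * ε k ω} := by
  have hsum := hε.map_sum_mul_eq_gaussianReal hεmeas
    (fun k ↦ ∏ j ∈ Finset.Icc (k + 1) n, t j) (Finset.Icc 1 n)
    fun k hk ↦ hεlaw k (Finset.mem_Icc.mp hk).1
  calc gaussianReal 0 (∑ i ∈ Finset.range (ℓ + 1), α ^ (2 * i)).toNNReal (Set.Ici a)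
      ≤ gaussianReal 0 (∑ k ∈ Finset.Icc 1 n, (∏ j ∈ Finset.Icc (k + 1) n, t j) ^ 2).toNNReal
          (Set.Ici a) :=
        gaussianReal_Ici_mono (Real.toNNReal_le_toNNReal (sum_range_pow_le_sum_sq_prod hℓ ht)) ha
    _ = μ {ω | a ≤ ∑ k ∈ Finset.Icc 1 n, (∏ j ∈ Finset.Icc (k + 1) n, t j) * ε k ω} := by
        rw [← hsum, Measure.map_apply (by fun_prop) measurableSet_Ici]
        rfl

end Probability

theorem stmt_9_general
    {Ω : Type*} [MeasureSpace Ω] [IsProbabilityMeasure (ℙ : Measure Ω)]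
    (α β : ℝ)
    (θ ε : ℕ → Ω → ℝ)
    (hθmeas : ∀ k, Measurable (θ k)) (hεmeas : ∀ k, Measurable (ε k))
    (hindep : iIndepFun
      (Sum.elim θ ε) ℙ)
    (hθlaw : ∀ k, 1 ≤ k → Measure.map (θ k) ℙ
      = (1 / 2 : ℝ≥0∞) • Measure.dirac α + (1 / 2 : ℝ≥0∞) • Measure.dirac β)
    (hεlaw : ∀ k, 1 ≤ k → Measure.map (ε k) ℙ = gaussianReal 0 1)
    (Y : ℕ → Ω → ℝ)
    (hY : ∀ n ω, Y n ω = ∑ k ∈ Finset.Icc 1 n,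
      (∏ ℓ ∈ Finset.Icc (k + 1) n, θ ℓ ω) * ε k ω)
    (n ℓ : ℕ) (hℓ : ℓ < n) (a : ℝ) (ha : 0 < a) :
    ((1 : ℝ≥0∞) / 2) ^ (ℓ + 1)
        * gaussianReal 0 (Real.toNNReal (∑ k ∈ Finset.range (ℓ + 1), α ^ (2 * k)))
          {x | a ≤ x}
      ≤ ℙ {ω | a ≤ Y n ω ∧ ∀ j ∈ Finset.Icc (n - ℓ) n, θ j ω = α} := by
  have hθ : iIndepFun θ ℙ := hindep.precomp (g := Sum.inl) Sum.inl_injective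
  have hε : iIndepFun ε ℙ := hindep.precomp (g := Sum.inr) Sum.inr_injective
  set B : Set (ℕ → ℝ) := {t | ∀ j ∈ Finset.Icc (n - ℓ) n, t j = α}
  set D : Set ((ℕ → ℝ) × (ℕ → ℝ)) :=
    {p | a ≤ ∑ k ∈ Finset.Icc 1 n, (∏ j ∈ Finset.Icc (k + 1) n, p.1 j) * p.2 k}
  have hB : MeasurableSet B := by
    simp only [B, Set.ofPred_forall]
    exact .biInter (Finset.countable_toSet _) fun j _ ↦
      measurableSet_eq_fun (measurable_pi_apply j) measurable_const
  have hD : MeasurableSet D := measurableSet_le measurable_const (by fun_prop)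
  have henv : ((1 : ℝ≥0∞) / 2) ^ (ℓ + 1) ≤ ℙ ((fun ω j ↦ θ j ω) ⁻¹' B) := by
    have hcard : (Finset.Icc (n - ℓ) n).card = ℓ + 1 := by rw [Nat.card_Icc]; omega
    rw [← hcard]
    refine hθ.pow_card_le_measure_forall_eq fun j hj ↦ ?_
    rw [← Measure.map_apply (hθmeas j) (measurableSet_singleton α),
      hθlaw j (by simp only [Finset.mem_Icc] at hj; omega)]
    simp
  have hevent : {ω | a ≤ Y n ω ∧ ∀ j ∈ Finset.Icc (n - ℓ) n, θ j ω = α}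
      = {ω | (fun j ↦ θ j ω) ∈ B ∧ ((fun j ↦ θ j ω), fun k ↦ ε k ω) ∈ D} := by
    ext ω
    simp [B, D, hY, and_comm]
  rw [hevent]
  exact (mul_le_mul_of_nonneg_right henv zero_le).trans <|
    (hindep.indepFun_sumElim hθmeas hεmeas).mul_le_measure_of_forall_le
      (by fun_prop) (by fun_prop) hB hD
      fun t ht ↦ gaussianReal_Ici_le_measure_sum_prod_mul hε hεmeas hεlaw hℓ ha ht

/-- Lower bound in the strictly stable case `0 < β ≤ α < 1`: for `ℓ < n` and `a > 0`,
`P(Y_n ≥ a, θ_n = α, …, θ_{n-ℓ} = α) ≥ 2^{-(ℓ+1)} P(N(0, u_ℓ²) ≥ a)` where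
`u_ℓ² = Σ_{k=0}^ℓ α^{2k}`. -/
theorem stmt_9
    {Ω : Type*} [MeasureSpace Ω] [IsProbabilityMeasure (ℙ : Measure Ω)]
    (α β : ℝ) (hβ : 0 < β) (hβα : β ≤ α) (hα : α < 1)
    (θ ε : ℕ → Ω → ℝ)
    (hθmeas : ∀ k, Measurable (θ k)) (hεmeas : ∀ k, Measurable (ε k))
    (hindep : iIndepFun
      (Sum.elim θ ε) ℙ)
    (hθlaw : ∀ k, 1 ≤ k → Measure.map (θ k) ℙ
      = (1 / 2 : ℝ≥0∞) • Measure.dirac α + (1 / 2 : ℝ≥0∞) • Measure.dirac β)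
    (hεlaw : ∀ k, 1 ≤ k → Measure.map (ε k) ℙ = gaussianReal 0 1)
    (Y : ℕ → Ω → ℝ)
    (hY : ∀ n ω, Y n ω = ∑ k ∈ Finset.Icc 1 n,
      (∏ ℓ ∈ Finset.Icc (k + 1) n, θ ℓ ω) * ε k ω)
    (n ℓ : ℕ) (hℓ : ℓ < n) (a : ℝ) (ha : 0 < a) :
    ((1 : ℝ≥0∞) / 2) ^ (ℓ + 1)
        * gaussianReal 0 (Real.toNNReal (∑ k ∈ Finset.range (ℓ + 1), α ^ (2 * k)))
          {x | a ≤ x}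
      ≤ ℙ {ω | a ≤ Y n ω ∧ ∀ j ∈ Finset.Icc (n - ℓ) n, θ j ω = α} :=
  stmt_9_general α β θ ε hθmeas hεmeas hindep hθlaw hεlaw Y hY n ℓ hℓ a ha
end

section
/- Many-to-one formula for the bifurcating autoregressive process: for all n ≥ 0 and all real a ≤ b, E[Z_n([a,b])] = 2^n P(Y_n ∈ [a,b]), where Z_n = Σ_{i ∈ G_n} δ_{X_i} and Y is the autoregressive process along a uniform random lineage. -/
open MeasureTheory ProbabilityTheory Filter
open scoped ENNReal

/-- The centered bivariate Gaussian measure on `ℝ × ℝ` with unit marginal variances and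
correlation `ρ`, realized as the image of two independent standard Gaussians. -/
noncomputable def gaussian2 (ρ : ℝ) : Measure (ℝ × ℝ) :=
  Measure.map (fun p : ℝ × ℝ => (p.1, ρ * p.1 + Real.sqrt (1 - ρ ^ 2) * p.2))
    ((gaussianReal 0 1).prod (gaussianReal 0 1))

/-!
Everything happens at the level of laws: we show `∑_{i ∈ G_m} law(X_i) = 2^m • law(Y_m)` and
integrate the indicator of `[a, b]` against both sides. Let `T_c μ` be the law of `c x + N(0,1)`
with `x ∼ μ` independent of the noise. Each `X_k` is a function of `X_1` and of the noise of
earlier generations, hence independent of the noise pair of its children, whose coordinates are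
both standard Gaussian; so `law(X_{2k}) = T_α law(X_k)` and `law(X_{2k+1}) = T_β law(X_k)`.
Likewise `Y_n` is independent of `(θ_{n+1}, ε_{n+1})`, so
`law(Y_{n+1}) = ½ T_α law(Y_n) + ½ T_β law(Y_n)`. As `T_c` is linear, summing the first recursion
over a generation reproduces the second one, multiplied by `2^{m+1}`.
-/

open scoped NNReal

lemma gaussian2_map_fst (ρ : ℝ) : (gaussian2 ρ).map Prod.fst = gaussianReal 0 1 := by
  rw [gaussian2, Measure.map_map measurable_fst (by fun_prop)]
  exact Measure.map_fst_prod.trans (by simp)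

lemma map_const_mul_add_prod_gaussianReal (c d : ℝ) :
    ((gaussianReal 0 1).prod (gaussianReal 0 1)).map (fun p : ℝ × ℝ => c * p.1 + d * p.2)
      = gaussianReal 0 (⟨c ^ 2 + d ^ 2, by positivity⟩ : ℝ≥0) := by
  have hsplit : (fun p : ℝ × ℝ => c * p.1 + d * p.2)
      = (fun p : ℝ × ℝ => p.1 + p.2) ∘ Prod.map (c * ·) (d * ·) := rfl
  rw [hsplit, ← Measure.map_map (by fun_prop) (by fun_prop),
    ← Measure.map_prod_map _ _ (by fun_prop) (by fun_prop), ← Measure.conv,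
    gaussianReal_map_const_mul, gaussianReal_map_const_mul, gaussianReal_conv_gaussianReal]
  congr 1
  · simp
  · ext; simp; rfl

lemma gaussian2_map_snd {ρ : ℝ} (hρ : ρ ^ 2 ≤ 1) :
    (gaussian2 ρ).map Prod.snd = gaussianReal 0 1 := by
  rw [gaussian2, Measure.map_map measurable_snd (by fun_prop), Function.comp_def,
    map_const_mul_add_prod_gaussianReal]
  congr
  simp [Real.sq_sqrt (sub_nonneg.2 hρ)]

noncomputable def arStep (c : ℝ) (μ : Measure ℝ) : Measure ℝ :=
  μ.map (c * ·) ∗ gaussianReal 0 1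

lemma arStep_add (c : ℝ) (μ ν : Measure ℝ) [SFinite μ] [SFinite ν] :
    arStep c (μ + ν) = arStep c μ + arStep c ν := by
  rw [arStep, Measure.map_add _ _ (by fun_prop), Measure.add_conv]; rfl

lemma arStep_smul (c : ℝ) (r : ℝ≥0∞) (μ : Measure ℝ) :
    arStep c (r • μ) = r • arStep c μ := by
  rw [arStep, Measure.map_smul, Measure.conv_smul_left]; rfl

lemma arStep_finsetSum {ι : Type*} (c : ℝ) (s : Finset ι) (μ : ι → Measure ℝ)
    [∀ i, IsFiniteMeasure (μ i)] :
    arStep c (∑ i ∈ s, μ i) = ∑ i ∈ s, arStep c (μ i) := by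
  classical
  induction s using Finset.induction with
  | empty => simp [arStep]
  | insert i s hi ih => rw [Finset.sum_insert hi, arStep_add, ih, Finset.sum_insert hi]

lemma Finset.sum_Ico_two_mul {M : Type*} [AddCommMonoid M] (f : ℕ → M) {a b : ℕ}
    (hab : a ≤ b) :
    ∑ i ∈ Finset.Ico (2 * a) (2 * b), f i
      = ∑ k ∈ Finset.Ico a b, (f (2 * k) + f (2 * k + 1)) := by
  induction b, hab using Nat.le_induction with
  | base => simp
  | succ b hab ih =>
    rw [Finset.sum_Ico_succ_top hab, ← ih, mul_add, mul_one, ← add_assoc,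
      Finset.sum_Ico_succ_top (by omega), Finset.sum_Ico_succ_top (by omega), add_assoc]

theorem sum_generation_eq_two_pow_smul {α β : ℝ} {p q : ℕ → Measure ℝ}
    [∀ i, IsFiniteMeasure (p i)] (hq0 : q 0 = p 1)
    (hp : ∀ k, 1 ≤ k → p (2 * k) = arStep α (p k) ∧ p (2 * k + 1) = arStep β (p k))
    (hq : ∀ n, q (n + 1) = (1 / 2 : ℝ≥0∞) • arStep α (q n) + (1 / 2 : ℝ≥0∞) • arStep β (q n))
    (m : ℕ) : ∑ i ∈ Finset.Ico (2 ^ m) (2 ^ (m + 1)), p i = (2 : ℝ≥0∞) ^ m • q m := by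
  induction m with
  | zero => simp [hq0]
  | succ m ih =>
    have hhalf : (2 : ℝ≥0∞) ^ (m + 1) * (1 / 2) = 2 ^ m := by
      rw [pow_succ, mul_assoc, one_div, ENNReal.mul_inv_cancel two_ne_zero ENNReal.ofNat_ne_top,
        mul_one]
    have hIco : Finset.Ico (2 ^ (m + 1)) (2 ^ (m + 1 + 1))
        = Finset.Ico (2 * 2 ^ m) (2 * 2 ^ (m + 1)) := by
      rw [pow_succ' 2 (m + 1), pow_succ' 2 m]
    have hchildren : ∀ k ∈ Finset.Ico (2 ^ m) (2 ^ (m + 1)),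
        p (2 * k) + p (2 * k + 1) = arStep α (p k) + arStep β (p k) := fun k hk => by
      obtain ⟨heven, hodd⟩ := hp k (Nat.one_le_two_pow.trans (Finset.mem_Ico.1 hk).1)
      rw [heven, hodd]
    rw [hIco, Finset.sum_Ico_two_mul _ (Nat.pow_le_pow_right two_pos m.le_succ),
      Finset.sum_congr rfl hchildren, Finset.sum_add_distrib, ← arStep_finsetSum,
      ← arStep_finsetSum, ih, arStep_smul, arStep_smul, hq, smul_add, smul_smul, smul_smul,
      hhalf]

namespace ProbabilityTheory

variable {Ω : Type*} {mΩ : MeasurableSpace Ω} {μ : Measure Ω}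

lemma Indep.sup_left_of_indep_sup [IsZeroOrProbabilityMeasure μ] {m₁ m₂ m₃ : MeasurableSpace Ω}
    (h₁ : m₁ ≤ mΩ) (h₂ : m₂ ≤ mΩ) (h₃ : m₃ ≤ mΩ)
    (h₁₂₃ : Indep m₁ (m₂ ⊔ m₃) μ) (h₂₃ : Indep m₂ m₃ μ) :
    Indep (m₁ ⊔ m₂) m₃ μ := by
  rw [Indep_iff] at h₁₂₃ h₂₃
  refine IndepSets.indep (sup_le h₁ h₂) h₃ ?_ (@MeasurableSpace.isPiSystem_measurableSet Ω m₃)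
    ?_ (@MeasurableSpace.generateFrom_measurableSet Ω m₃).symm ?_
    (p1 := {s | ∃ a b, MeasurableSet[m₁] a ∧ MeasurableSet[m₂] b ∧ s = a ∩ b})
  · rintro - ⟨a, b, ha, hb, rfl⟩ - ⟨a', b', ha', hb', rfl⟩ -
    exact ⟨a ∩ a', b ∩ b', ha.inter ha', hb.inter hb', by ext; simp; tauto⟩
  · refine le_antisymm (sup_le ?_ ?_) (MeasurableSpace.generateFrom_le ?_)
    · exact fun s hs => MeasurableSpace.measurableSet_generateFrom
        ⟨s, Set.univ, hs, MeasurableSet.univ, (Set.inter_univ s).symm⟩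
    · exact fun s hs => MeasurableSpace.measurableSet_generateFrom
        ⟨Set.univ, s, MeasurableSet.univ, hs, (Set.univ_inter s).symm⟩
    · rintro - ⟨a, b, ha, hb, rfl⟩
      exact (le_sup_left (b := m₂) a ha).inter (le_sup_right (a := m₁) b hb)
  · rw [IndepSets_iff]
    rintro - t ⟨a, b, ha, hb, rfl⟩ ht
    have hb' : MeasurableSet[m₂ ⊔ m₃] b := le_sup_left (b := m₃) b hb
    have ht' : MeasurableSet[m₂ ⊔ m₃] t := le_sup_right (a := m₂) t ht
    rw [Set.inter_assoc, h₁₂₃ a _ ha (hb'.inter ht'), h₂₃ b t hb ht, h₁₂₃ a b ha hb',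
      mul_assoc]

variable {ι β γ : Type*} [MeasurableSpace β] [MeasurableSpace γ]

abbrev initNoiseSigma (Z : Ω → β) (ξ : ι → Ω → γ) (S : Set ι) : MeasurableSpace Ω :=
  MeasurableSpace.comap Z inferInstance ⊔ ⨆ i ∈ S, MeasurableSpace.comap (ξ i) inferInstance

section initNoiseSigma

variable {Z : Ω → β} {ξ : ι → Ω → γ} {S T : Set ι}

lemma measurable_initNoiseSigma_init : Measurable[initNoiseSigma Z ξ S] Z :=
  Measurable.of_comap_le le_sup_left

lemma measurable_initNoiseSigma_noise {i : ι} (hi : i ∈ S) :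
    Measurable[initNoiseSigma Z ξ S] (ξ i) :=
  Measurable.of_comap_le <| (le_iSup₂ (f := fun j (_ : j ∈ S) =>
    MeasurableSpace.comap (ξ j) inferInstance) i hi).trans le_sup_right

lemma initNoiseSigma_mono (hST : S ⊆ T) : initNoiseSigma Z ξ S ≤ initNoiseSigma Z ξ T :=
  sup_le_sup_left (biSup_mono hST) _

lemma initNoiseSigma_le (hZ : Measurable Z) (hξ : ∀ i, Measurable (ξ i)) :
    initNoiseSigma Z ξ S ≤ mΩ :=
  sup_le hZ.comap_le (iSup₂_le fun i _ => (hξ i).comap_le)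

lemma indepFun_of_measurable_initNoiseSigma [IsProbabilityMeasure μ] {δ : Type*}
    [MeasurableSpace δ] (hZ : Measurable Z) (hξ : ∀ i, Measurable (ξ i))
    (hξ_indep : iIndepFun ξ μ) (hZξ : IndepFun Z (fun ω i => ξ i ω) μ) {V : Ω → δ}
    (hV : Measurable[initNoiseSigma Z ξ S] V) {j : ι} (hj : j ∉ S) : IndepFun V (ξ j) μ := by
  have hS : (⨆ i ∈ S, MeasurableSpace.comap (ξ i) inferInstance) ≤ mΩ :=
    iSup₂_le fun i _ => (hξ i).comap_le
  have hnoise : Indep (⨆ i ∈ S, MeasurableSpace.comap (ξ i) inferInstance)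
      (MeasurableSpace.comap (ξ j) inferInstance) μ := by
    simpa using indep_iSup_of_disjoint (fun i => (hξ i).comap_le) hξ_indep.iIndep
      (Set.disjoint_singleton_right.2 hj)
  have hinit : Indep (MeasurableSpace.comap Z inferInstance)
      ((⨆ i ∈ S, MeasurableSpace.comap (ξ i) inferInstance) ⊔
        MeasurableSpace.comap (ξ j) inferInstance) μ := by
    have hproc : Measurable[MeasurableSpace.comap (fun ω i => ξ i ω) inferInstance]
        (fun ω i => ξ i ω) := Measurable.of_comap_le le_rfl
    refine indep_of_indep_of_le_right ((IndepFun_iff_Indep _ _ _).1 hZξ) (sup_le ?_ ?_)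
    · exact iSup₂_le fun i _ => ((measurable_pi_apply i).comp hproc).comap_le
    · exact ((measurable_pi_apply j).comp hproc).comap_le
  rw [IndepFun_iff_Indep]
  exact indep_of_indep_of_le_left
    (hinit.sup_left_of_indep_sup hZ.comap_le hS (hξ j).comap_le hnoise) hV.comap_le

end initNoiseSigma

lemma integral_finsetSum_indicator_eq [IsFiniteMeasure μ] {ι : Type*} {s : Finset ι}
    {X : ι → Ω → ℝ} (hX : ∀ i, Measurable (X i)) {ν : Measure ℝ} {c : ℝ≥0∞}
    (hlaw : ∑ i ∈ s, μ.map (X i) = c • ν) {A : Set ℝ} (hA : MeasurableSet A) :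
    ∫ ω, ∑ i ∈ s, A.indicator (fun _ => (1 : ℝ)) (X i ω) ∂μ = c.toReal * ν.real A := by
  have hf : ∀ (ρ : Measure ℝ) [IsFiniteMeasure ρ], Integrable (A.indicator fun _ => (1 : ℝ)) ρ :=
    fun _ _ => (integrable_const 1).indicator hA
  calc ∫ ω, ∑ i ∈ s, A.indicator (fun _ => (1 : ℝ)) (X i ω) ∂μ
      = ∑ i ∈ s, ∫ x, A.indicator (fun _ => (1 : ℝ)) x ∂(μ.map (X i)) :=
        (integral_finsetSum _ fun i _ => (hf _).comp_measurable (hX i)).trans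
          (Finset.sum_congr rfl fun i _ => (integral_map (hX i).aemeasurable
            (measurable_const.indicator hA).aestronglyMeasurable).symm)
    _ = ∫ x, A.indicator (fun _ => (1 : ℝ)) x ∂(c • ν) := by
        rw [← hlaw, integral_finsetSum_measure fun i _ => hf _]
    _ = c.toReal * ν.real A := by
        rw [integral_smul_measure, integral_indicator_const _ hA, smul_eq_mul, smul_eq_mul,
          mul_one]

section IsProbabilityMeasure

variable [IsProbabilityMeasure μ]

lemma IndepFun.map_const_mul_add_eq_arStep {Z ξ : Ω → ℝ} (hZ : Measurable Z)
    (hξ : Measurable ξ) (hZξ : IndepFun Z ξ μ) (hξlaw : μ.map ξ = gaussianReal 0 1) (c : ℝ) :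
    μ.map (fun ω => c * Z ω + ξ ω) = arStep c (μ.map Z) := by
  have hcZ : IndepFun (fun ω => c * Z ω) ξ μ := hZξ.comp (measurable_const_mul c) measurable_id
  rw [show (fun ω => c * Z ω + ξ ω) = (fun ω => c * Z ω) + ξ from rfl,
    hcZ.map_add_eq_map_conv_map (by fun_prop) hξ, hξlaw, arStep,
    Measure.map_map (measurable_const_mul c) hZ]
  rfl

lemma IndepFun.map_mul_eq_of_map_eq_two_point {Z θ : Ω → ℝ} (hZ : Measurable Z)
    (hθ : Measurable θ) (hθZ : IndepFun θ Z μ) {α β : ℝ}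
    (hθlaw : μ.map θ = (1 / 2 : ℝ≥0∞) • Measure.dirac α + (1 / 2 : ℝ≥0∞) • Measure.dirac β) :
    μ.map (fun ω => θ ω * Z ω)
      = (1 / 2 : ℝ≥0∞) • (μ.map Z).map (α * ·)
        + (1 / 2 : ℝ≥0∞) • (μ.map Z).map (β * ·) := by
  have : IsProbabilityMeasure (μ.map Z) := Measure.isProbabilityMeasure_map hZ.aemeasurable
  have hmul : Measurable fun p : ℝ × ℝ => p.1 * p.2 := by fun_prop
  rw [show (fun ω => θ ω * Z ω) = θ * Z from rfl, hθZ.map_mul_eq_map_mconv_map hθ hZ, hθlaw,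
    Measure.mconv, Measure.add_prod, Measure.prod_smul_left, Measure.prod_smul_left,
    Measure.dirac_prod, Measure.dirac_prod, Measure.map_add _ _ hmul, Measure.map_smul,
    Measure.map_smul, Measure.map_map hmul measurable_prodMk_left,
    Measure.map_map hmul measurable_prodMk_left]
  rfl

lemma map_mul_add_eq_arStep {Z θ ξ : Ω → ℝ} (hZ : Measurable Z) (hθ : Measurable θ)
    (hξ : Measurable ξ) (hθZ : IndepFun θ Z μ)
    (hξ_indep : IndepFun (fun ω => (θ ω, Z ω)) ξ μ) {α β : ℝ}
    (hθlaw : μ.map θ = (1 / 2 : ℝ≥0∞) • Measure.dirac α + (1 / 2 : ℝ≥0∞) • Measure.dirac β)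
    (hξlaw : μ.map ξ = gaussianReal 0 1) :
    μ.map (fun ω => θ ω * Z ω + ξ ω)
      = (1 / 2 : ℝ≥0∞) • arStep α (μ.map Z) + (1 / 2 : ℝ≥0∞) • arStep β (μ.map Z) := by
  have : IsProbabilityMeasure (μ.map Z) := Measure.isProbabilityMeasure_map hZ.aemeasurable
  have hθZξ : IndepFun (fun ω => θ ω * Z ω) ξ μ :=
    hξ_indep.comp (φ := fun p : ℝ × ℝ => p.1 * p.2) (by fun_prop) measurable_id
  rw [show (fun ω => θ ω * Z ω + ξ ω) = (fun ω => θ ω * Z ω) + ξ from rfl,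
    hθZξ.map_add_eq_map_conv_map (by fun_prop) hξ, hξlaw,
    hθZ.map_mul_eq_of_map_eq_two_point hZ hθ hθlaw, Measure.add_conv, Measure.conv_smul_left,
    Measure.conv_smul_left]
  rfl

end IsProbabilityMeasure

end ProbabilityTheory

section BAR

open ProbabilityTheory

variable {Ω : Type*} {mΩ : MeasurableSpace Ω} {μ : Measure Ω} {α β : ℝ}

-- the noise of the two children of vertex `k + 1`
def barNoise (η : ℕ → Ω → ℝ) (k : ℕ) (ω : Ω) : ℝ × ℝ :=
  (η (2 * (k + 1)) ω, η (2 * (k + 1) + 1) ω)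

lemma measurable_bar_initNoiseSigma {X η : ℕ → Ω → ℝ}
    (hXrec : ∀ k, 1 ≤ k → ∀ ω,
      X (2 * k) ω = α * X k ω + η (2 * k) ω ∧ X (2 * k + 1) ω = β * X k ω + η (2 * k + 1) ω)
    (k : ℕ) : Measurable[initNoiseSigma (X 1) (barNoise η) (Set.Iio k)] (X (k + 1)) := by
  induction k using Nat.strong_induction_on with
  | _ k ih =>
  rcases k with _ | k
  · exact measurable_initNoiseSigma_init
  obtain ⟨j, hj⟩ : ∃ j, k / 2 = j := ⟨_, rfl⟩
  have hparent : Measurable[initNoiseSigma (X 1) (barNoise η) (Set.Iio (k + 1))] (X (j + 1)) :=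
    (ih j (by omega)).mono (initNoiseSigma_mono (Set.Iio_subset_Iio (by omega))) le_rfl
  have hnoise : Measurable[initNoiseSigma (X 1) (barNoise η) (Set.Iio (k + 1))] (barNoise η j) :=
    measurable_initNoiseSigma_noise (by simp only [Set.mem_Iio]; omega)
  rcases Nat.even_or_odd' k with ⟨j', rfl | rfl⟩ <;> obtain rfl : j = j' := by omega
  · rw [show 2 * j + 1 + 1 = 2 * (j + 1) by ring,
      funext fun ω => (hXrec (j + 1) le_add_self ω).1]
    exact (hparent.const_mul α).add (measurable_fst.comp hnoise)
  · rw [show 2 * j + 1 + 1 + 1 = 2 * (j + 1) + 1 by ring,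
      funext fun ω => (hXrec (j + 1) le_add_self ω).2]
    exact (hparent.const_mul β).add (measurable_snd.comp hnoise)

lemma map_bar_children [IsProbabilityMeasure μ] {ρ : ℝ} (hρ : ρ ^ 2 ≤ 1) {X η : ℕ → Ω → ℝ}
    (hXmeas : ∀ i, Measurable (X i)) (hηmeas : ∀ i, Measurable (η i))
    (hXrec : ∀ k, 1 ≤ k → ∀ ω,
      X (2 * k) ω = α * X k ω + η (2 * k) ω ∧ X (2 * k + 1) ω = β * X k ω + η (2 * k + 1) ω)
    (hηiid : iIndepFun (barNoise η) μ) (hηlaw : ∀ k, μ.map (barNoise η k) = gaussian2 ρ)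
    (hηX1 : IndepFun (X 1) (fun ω k => barNoise η k ω) μ) {k : ℕ} (hk : 1 ≤ k) :
    μ.map (X (2 * k)) = arStep α (μ.map (X k)) ∧
      μ.map (X (2 * k + 1)) = arStep β (μ.map (X k)) := by
  obtain ⟨k, rfl⟩ : ∃ j, k = j + 1 := ⟨k - 1, by omega⟩
  have hnoise : ∀ j, Measurable (barNoise η j) := fun j => (hηmeas _).prodMk (hηmeas _)
  have hindep : IndepFun (X (k + 1)) (barNoise η k) μ :=
    indepFun_of_measurable_initNoiseSigma (hXmeas 1) hnoise hηiid hηX1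
      (measurable_bar_initNoiseSigma hXrec k) (lt_irrefl k)
  have hlaw : ∀ f : ℝ × ℝ → ℝ, Measurable f → (gaussian2 ρ).map f = gaussianReal 0 1 →
      μ.map (f ∘ barNoise η k) = gaussianReal 0 1 := fun f hf hfρ => by
    rw [← Measure.map_map hf (hnoise k), hηlaw, hfρ]
  constructor
  · rw [funext fun ω => (hXrec (k + 1) le_add_self ω).1]
    exact (hindep.comp measurable_id measurable_fst).map_const_mul_add_eq_arStep (hXmeas _)
      (hηmeas _) (hlaw _ measurable_fst (gaussian2_map_fst ρ)) α
  · rw [funext fun ω => (hXrec (k + 1) le_add_self ω).2]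
    exact (hindep.comp measurable_id measurable_snd).map_const_mul_add_eq_arStep (hXmeas _)
      (hηmeas _) (hlaw _ measurable_snd (gaussian2_map_snd hρ)) β

end BAR

section RandomCoefficientAR

open ProbabilityTheory

variable {Ω : Type*} {mΩ : MeasurableSpace Ω} {μ : Measure Ω} {Y θ ε : ℕ → Ω → ℝ}

lemma measurable_randomAR_initNoiseSigma
    (hYrec : ∀ n, 1 ≤ n → ∀ ω, Y n ω = θ n ω * Y (n - 1) ω + ε n ω) (n : ℕ) :
    Measurable[initNoiseSigma (Y 0) (Sum.elim θ ε) {i | Sum.elim id id i ≤ n}] (Y n) := by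
  induction n with
  | zero => exact measurable_initNoiseSigma_init
  | succ n ih =>
    rw [funext (hYrec (n + 1) le_add_self), Nat.add_sub_cancel]
    have hθ : Measurable[initNoiseSigma (Y 0) (Sum.elim θ ε) {i | Sum.elim id id i ≤ n + 1}]
        (θ (n + 1)) := measurable_initNoiseSigma_noise (i := Sum.inl (n + 1)) (le_refl (n + 1))
    have hε : Measurable[initNoiseSigma (Y 0) (Sum.elim θ ε) {i | Sum.elim id id i ≤ n + 1}]
        (ε (n + 1)) := measurable_initNoiseSigma_noise (i := Sum.inr (n + 1)) (le_refl (n + 1))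
    have hY := ih.mono (initNoiseSigma_mono fun i (hi : _ ≤ n) => (hi.trans n.le_succ :)) le_rfl
    exact (hθ.mul hY).add hε

lemma measurable_randomAR (hY0 : Measurable (Y 0)) (hθmeas : ∀ k, Measurable (θ k))
    (hεmeas : ∀ k, Measurable (ε k))
    (hYrec : ∀ n, 1 ≤ n → ∀ ω, Y n ω = θ n ω * Y (n - 1) ω + ε n ω) (n : ℕ) :
    Measurable (Y n) :=
  (measurable_randomAR_initNoiseSigma hYrec n).mono
    (initNoiseSigma_le hY0 fun i => Sum.rec hθmeas hεmeas i) le_rfl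

lemma map_randomAR_succ [IsProbabilityMeasure μ] {α β : ℝ} (hY0 : Measurable (Y 0))
    (hθmeas : ∀ k, Measurable (θ k)) (hεmeas : ∀ k, Measurable (ε k))
    (hθε : iIndepFun (Sum.elim θ ε) μ)
    (hY0θε : IndepFun (Y 0) (fun ω => ((fun k => θ k ω), (fun k => ε k ω))) μ)
    (hθlaw : ∀ k, 1 ≤ k →
      μ.map (θ k) = (1 / 2 : ℝ≥0∞) • Measure.dirac α + (1 / 2 : ℝ≥0∞) • Measure.dirac β)
    (hεlaw : ∀ k, 1 ≤ k → μ.map (ε k) = gaussianReal 0 1)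
    (hYrec : ∀ n, 1 ≤ n → ∀ ω, Y n ω = θ n ω * Y (n - 1) ω + ε n ω) (n : ℕ) :
    μ.map (Y (n + 1))
      = (1 / 2 : ℝ≥0∞) • arStep α (μ.map (Y n)) + (1 / 2 : ℝ≥0∞) • arStep β (μ.map (Y n)) := by
  have hξ : ∀ i, Measurable (Sum.elim θ ε i) := fun i => Sum.rec hθmeas hεmeas i
  have hY0ξ : IndepFun (Y 0) (fun ω i => Sum.elim θ ε i ω) μ := by
    have hmeas : Measurable fun p : (ℕ → ℝ) × (ℕ → ℝ) => Sum.elim p.1 p.2 :=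
      measurable_pi_iff.2 fun i => by
        cases i
        exacts [(measurable_pi_apply _).comp measurable_fst,
          (measurable_pi_apply _).comp measurable_snd]
    convert hY0θε.comp measurable_id hmeas using 1
    · rfl
    · funext ω i
      cases i <;> rfl
  set S : Set (ℕ ⊕ ℕ) := {i | Sum.elim id id i ≤ n}
  have hYn : Measurable[initNoiseSigma (Y 0) (Sum.elim θ ε) S] (Y n) :=
    measurable_randomAR_initNoiseSigma hYrec n
  have hθY : IndepFun (θ (n + 1)) (Y n) μ :=
    (indepFun_of_measurable_initNoiseSigma hY0 hξ hθε hY0ξ hYn (j := Sum.inl (n + 1))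
      (by simp [S])).symm
  have hθYε : IndepFun (fun ω => (θ (n + 1) ω, Y n ω)) (ε (n + 1)) μ :=
    indepFun_of_measurable_initNoiseSigma hY0 hξ hθε hY0ξ (j := Sum.inr (n + 1))
      (S := insert (Sum.inl (n + 1)) S)
      ((measurable_initNoiseSigma_noise (Set.mem_insert _ _)).prodMk
        (hYn.mono (initNoiseSigma_mono (Set.subset_insert _ _)) le_rfl))
      (by simp [S])
  rw [funext (hYrec (n + 1) le_add_self), Nat.add_sub_cancel]
  exact map_mul_add_eq_arStep (measurable_randomAR hY0 hθmeas hεmeas hYrec n) (hθmeas _)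
    (hεmeas _) hθY hθYε (hθlaw _ le_add_self) (hεlaw _ le_add_self)

end RandomCoefficientAR

theorem stmt_10_general
    {Ω : Type*} [MeasureSpace Ω] [IsProbabilityMeasure (ℙ : Measure Ω)]
    (α β ρ : ℝ) (hρ : ρ ∈ Set.Ioo (-1 : ℝ) 1)
    -- the BAR process X with noise η
    (X η : ℕ → Ω → ℝ)
    (hXmeas : ∀ i, Measurable (X i)) (hηmeas : ∀ i, Measurable (η i))
    (hXrec : ∀ k, 1 ≤ k → ∀ ω,
      X (2 * k) ω = α * X k ω + η (2 * k) ω ∧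
      X (2 * k + 1) ω = β * X k ω + η (2 * k + 1) ω)
    (hηiid : iIndepFun
      (fun k ω => (η (2 * (k + 1)) ω, η (2 * (k + 1) + 1) ω)) ℙ)
    (hηlaw : ∀ k, Measure.map (fun ω => (η (2 * (k + 1)) ω, η (2 * (k + 1) + 1) ω)) ℙ
      = gaussian2 ρ)
    (hηX1 : IndepFun (X 1)
      (fun ω => fun k : ℕ => (η (2 * (k + 1)) ω, η (2 * (k + 1) + 1) ω)) ℙ)
    -- the auxiliary process Y along a uniform random lineage
    (θ ε : ℕ → Ω → ℝ)
    (hθmeas : ∀ k, Measurable (θ k)) (hεmeas : ∀ k, Measurable (ε k))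
    (hθεindep : iIndepFun
      (Sum.elim θ ε) ℙ)
    (hθεX1 : IndepFun (X 1)
      (fun ω => ((fun k : ℕ => θ k ω), (fun k : ℕ => ε k ω))) ℙ)
    (hθlaw : ∀ k, 1 ≤ k → Measure.map (θ k) ℙ
      = (1 / 2 : ℝ≥0∞) • Measure.dirac α + (1 / 2 : ℝ≥0∞) • Measure.dirac β)
    (hεlaw : ∀ k, 1 ≤ k → Measure.map (ε k) ℙ = gaussianReal 0 1)
    (Y : ℕ → Ω → ℝ) (hY0 : ∀ ω, Y 0 ω = X 1 ω)
    (hYrec : ∀ n, 1 ≤ n → ∀ ω, Y n ω = θ n ω * Y (n - 1) ω + ε n ω)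
    (n : ℕ) (a b : ℝ) :
    ∫ ω, (∑ i ∈ Finset.Ico (2 ^ n) (2 ^ (n + 1)),
        Set.indicator (Set.Icc a b) (fun _ => (1 : ℝ)) (X i ω)) ∂ℙ
      = 2 ^ n * (ℙ {ω | Y n ω ∈ Set.Icc a b}).toReal := by
  have hρ2 : ρ ^ 2 ≤ 1 := by nlinarith [hρ.1, hρ.2]
  have hY0' : Y 0 = X 1 := funext hY0
  have hY0meas : Measurable (Y 0) := hY0' ▸ hXmeas 1
  have hlaws := sum_generation_eq_two_pow_smul (p := fun i => Measure.map (X i) ℙ)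
    (q := fun n => Measure.map (Y n) ℙ) (by rw [hY0'])
    (fun k hk => map_bar_children hρ2 hXmeas hηmeas hXrec hηiid hηlaw hηX1 hk)
    (map_randomAR_succ hY0meas hθmeas hεmeas hθεindep (by rwa [hY0']) hθlaw hεlaw hYrec) n
  rw [integral_finsetSum_indicator_eq hXmeas hlaws measurableSet_Icc, measureReal_def,
    Measure.map_apply (measurable_randomAR hY0meas hθmeas hεmeas hYrec n) measurableSet_Icc,
    ENNReal.toReal_pow, ENNReal.toReal_ofNat]
  rfl

/-- Many-to-one formula for the bifurcating autoregressive process: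
`E[Z_n([a,b])] = 2^n P(Y_n ∈ [a,b])`. -/
theorem stmt_10
    {Ω : Type*} [MeasureSpace Ω] [IsProbabilityMeasure (ℙ : Measure Ω)]
    (α β ρ : ℝ) (hρ : ρ ∈ Set.Ioo (-1 : ℝ) 1) (hα : 0 ≤ α) (hβ : 0 ≤ β)
    -- the BAR process X with noise η
    (X η : ℕ → Ω → ℝ)
    (hXmeas : ∀ i, Measurable (X i)) (hηmeas : ∀ i, Measurable (η i))
    (hXrec : ∀ k, 1 ≤ k → ∀ ω,
      X (2 * k) ω = α * X k ω + η (2 * k) ω ∧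
      X (2 * k + 1) ω = β * X k ω + η (2 * k + 1) ω)
    (hηiid : iIndepFun
      (fun k ω => (η (2 * (k + 1)) ω, η (2 * (k + 1) + 1) ω)) ℙ)
    (hηlaw : ∀ k, Measure.map (fun ω => (η (2 * (k + 1)) ω, η (2 * (k + 1) + 1) ω)) ℙ
      = gaussian2 ρ)
    (hηX1 : IndepFun (X 1)
      (fun ω => fun k : ℕ => (η (2 * (k + 1)) ω, η (2 * (k + 1) + 1) ω)) ℙ)
    -- the auxiliary process Y along a uniform random lineage
    (θ ε : ℕ → Ω → ℝ)
    (hθmeas : ∀ k, Measurable (θ k)) (hεmeas : ∀ k, Measurable (ε k))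
    (hθεindep : iIndepFun
      (Sum.elim θ ε) ℙ)
    (hθεX1 : IndepFun (X 1)
      (fun ω => ((fun k : ℕ => θ k ω), (fun k : ℕ => ε k ω))) ℙ)
    (hθlaw : ∀ k, 1 ≤ k → Measure.map (θ k) ℙ
      = (1 / 2 : ℝ≥0∞) • Measure.dirac α + (1 / 2 : ℝ≥0∞) • Measure.dirac β)
    (hεlaw : ∀ k, 1 ≤ k → Measure.map (ε k) ℙ = gaussianReal 0 1)
    (Y : ℕ → Ω → ℝ) (hY0 : ∀ ω, Y 0 ω = X 1 ω)
    (hYrec : ∀ n, 1 ≤ n → ∀ ω, Y n ω = θ n ω * Y (n - 1) ω + ε n ω)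
    (n : ℕ) (a b : ℝ) (hab : a ≤ b) :
    ∫ ω, (∑ i ∈ Finset.Ico (2 ^ n) (2 ^ (n + 1)),
        Set.indicator (Set.Icc a b) (fun _ => (1 : ℝ)) (X i ω)) ∂ℙ
      = 2 ^ n * (ℙ {ω | Y n ω ∈ Set.Icc a b}).toReal :=
  stmt_10_general α β ρ hρ X η hXmeas hηmeas hXrec hηiid hηlaw hηX1 θ ε hθmeas hεmeas hθεindep hθεX1
    hθlaw hεlaw Y hY0 hYrec n a b
end

section
/- If αβ ≥ 1 with α, β > 0, then the random series (A_∞*)² = Σ_{k=1}^∞ ∏_{ℓ=1}^{k-1} θ_ℓ² diverges almost surely, where (θ_ℓ) are i.i.d. uniform on {α, β}. -/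
/-!
If the series converges, its terms tend to zero, so from some index on every product
`∏_{0<ℓ<k} θ_ℓ²` is `< 1`. Replacing each `θ_ℓ` by `αβ/θ_ℓ` swaps `α` and `β`, hence preserves
the law of the whole sequence, while a product times its reflected product is
`(αβ)^{2(k-1)} ≥ 1`: the two cannot both be `< 1`, so each is `< 1` with probability at most
`1/2`, and the series converges with probability at most `1/2`. As the `θ_ℓ` are a.s. nonzero,
convergence does not depend on finitely many factors; it is a tail event, so by Kolmogorov's
0-1 law its probability is `0`.
-/

open MeasureTheory ProbabilityTheory Filter Finset
open scoped ENNReal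

lemma prod_Ioo_eq_mul_prod_Ioo_add_one {M : Type*} [CommMonoid M] (y : ℕ → M) {m k : ℕ}
    (h : m + 1 < k) : ∏ ℓ ∈ Ioo m k, y ℓ = y (m + 1) * ∏ ℓ ∈ Ioo (m + 1) k, y ℓ := by
  rw [← Ico_add_one_left_eq_Ioo, ← Ioo_insert_left h, prod_insert left_notMem_Ioo]

lemma summable_prod_Ioo_of_summable_prod_Ioo_add_one {y : ℕ → ℝ} {m : ℕ}
    (h : Summable fun k => ∏ ℓ ∈ Ioo (m + 1) k, y ℓ) :
    Summable fun k => ∏ ℓ ∈ Ioo m k, y ℓ := by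
  refine summable_congr_atTop ?_ |>.2 (h.mul_left (y (m + 1)))
  filter_upwards [eventually_gt_atTop (m + 1)] with k hk
  exact prod_Ioo_eq_mul_prod_Ioo_add_one y hk

lemma summable_prod_Ioo_add_one_iff {y : ℕ → ℝ} {m : ℕ} (hy : y (m + 1) ≠ 0) :
    (Summable fun k => ∏ ℓ ∈ Ioo (m + 1) k, y ℓ) ↔ Summable fun k => ∏ ℓ ∈ Ioo m k, y ℓ := by
  rw [← summable_mul_left_iff hy]
  refine summable_congr_atTop ?_
  filter_upwards [eventually_gt_atTop (m + 1)] with k hk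
  exact (prod_Ioo_eq_mul_prod_Ioo_add_one y hk).symm

lemma antitone_setOf_summable_prod_Ioo {ι : Type*} (y : ℕ → ι → ℝ) :
    Antitone fun m => {ω | Summable fun k => ∏ ℓ ∈ Ioo m k, y ℓ ω} :=
  antitone_nat_of_succ_le fun _ _ => summable_prod_Ioo_of_summable_prod_Ioo_add_one

lemma summable_prod_Ioo_zero_iff_forall {y : ℕ → ℝ} (hy : ∀ ℓ, y ℓ ≠ 0) :
    (Summable fun k => ∏ ℓ ∈ Ioo 0 k, y ℓ) ↔ ∀ m, Summable fun k => ∏ ℓ ∈ Ioo m k, y ℓ := by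
  refine ⟨fun h m => ?_, fun h => h 0⟩
  induction m with
  | zero => exact h
  | succ m ih => exact (summable_prod_Ioo_add_one_iff (hy _)).2 ih

lemma one_le_prod_sq_mul_prod_div_sq {ι : Type*} (s : Finset ι) {c : ℝ} (hc : 1 ≤ c)
    {x : ι → ℝ} (hx : ∀ i, x i ≠ 0) : 1 ≤ (∏ i ∈ s, x i ^ 2) * ∏ i ∈ s, (c / x i) ^ 2 := by
  rw [← prod_mul_distrib]
  refine one_le_prod fun i _ => ?_
  rw [← mul_pow, mul_div_cancel₀ c (hx i)]
  exact one_le_pow₀ hc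

lemma measurableSet_setOf_summable {Ω : Type*} {m : MeasurableSpace Ω} {f : ℕ → Ω → ℝ}
    (hf : ∀ k, Measurable (f k)) : MeasurableSet {ω | Summable fun k => f k ω} := by
  have : {ω | Summable fun k => f k ω}
      = {ω | ∃ c, Tendsto (fun n => ∑ k ∈ range n, |f k ω|) atTop (nhds c)} := by
    ext ω
    simp only [Set.mem_ofPred_eq, ← summable_abs_iff (f := fun k => f k ω)]
    exact ⟨fun h => ⟨_, (hasSum_iff_tendsto_nat_of_nonneg (fun k => abs_nonneg _) _).1 h.hasSum⟩,
      fun ⟨c, hc⟩ => ⟨c, (hasSum_iff_tendsto_nat_of_nonneg (fun k => abs_nonneg _) _).2 hc⟩⟩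
  rw [this]
  exact measurableSet_exists_tendsto fun n => Finset.measurable_sum _ fun k _ => (hf k).abs

lemma measure_setOf_summable_le {Ω : Type*} [MeasurableSpace Ω] {μ : Measure Ω}
    {f : ℕ → Ω → ℝ} {c : ℝ≥0∞} (h : ∀ k, μ {ω | f k ω < 1} ≤ c) :
    μ {ω | Summable fun k => f k ω} ≤ c := by
  let A : ℕ → Set Ω := fun N => {ω | ∀ k ≥ N, f k ω < 1}
  have hsub : {ω | Summable fun k => f k ω} ⊆ ⋃ N, A N := fun ω hω =>
    Set.mem_iUnion.2 <| eventually_atTop.1 <|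
      (Summable.tendsto_atTop_zero hω).eventually_lt_const one_pos
  have hmono : Monotone A := fun a b hab ω hω k hk => hω k (hab.trans hk)
  calc μ {ω | Summable fun k => f k ω} ≤ μ (⋃ N, A N) := measure_mono hsub
    _ = ⨆ N, μ (A N) := hmono.measure_iUnion
    _ ≤ c := iSup_le fun N =>
      (measure_mono fun ω (hω : ∀ k ≥ N, f k ω < 1) => hω N le_rfl).trans (h N)

lemma measure_preimage_le_half_of_identDistrib {Ω E : Type*} [MeasurableSpace Ω]
    [MeasurableSpace E] {μ : Measure Ω} [IsProbabilityMeasure μ] {X X' : Ω → E} {A : Set E}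
    (hX : IdentDistrib X X' μ μ) (hA : MeasurableSet A) (hdisj : ∀ᵐ ω ∂μ, X ω ∈ A → X' ω ∉ A) :
    μ (X ⁻¹' A) ≤ 1 / 2 := by
  have hcompl : μ (X ⁻¹' A) + μ (X ⁻¹' A)ᶜ = 1 := by
    rw [measure_add_measure_compl₀ (hX.aemeasurable_fst.nullMeasurableSet_preimage hA),
      measure_univ]
  have hle : μ (X ⁻¹' A) ≤ μ (X ⁻¹' A)ᶜ := by
    rw [hX.measure_mem_eq hA]
    refine measure_mono_ae ?_
    filter_upwards [hdisj] with ω hω h' h using hω h h'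
  rw [ENNReal.le_div_iff_mul_le (by simp) (by simp), mul_two, ← hcompl]
  gcongr

lemma measure_setOf_summable_prod_Ioo_eq_zero_or_one {Ω : Type*} [MeasurableSpace Ω]
    {μ : Measure Ω} [IsProbabilityMeasure μ] {Y : ℕ → Ω → ℝ} (hY : ∀ ℓ, Measurable (Y ℓ))
    (hind : iIndepFun Y μ) (hne : ∀ᵐ ω ∂μ, ∀ ℓ, Y ℓ ω ≠ 0) :
    μ {ω | Summable fun k => ∏ ℓ ∈ Ioo 0 k, Y ℓ ω} = 0 ∨
      μ {ω | Summable fun k => ∏ ℓ ∈ Ioo 0 k, Y ℓ ω} = 1 := by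
  set U : ℕ → Set Ω := fun m => {ω | Summable fun k => ∏ ℓ ∈ Ioo m k, Y ℓ ω}
  have hUT : U 0 =ᵐ[μ] ⋂ m, U m := by
    filter_upwards [hne] with ω hω
    change (ω ∈ U 0) = (ω ∈ ⋂ m, U m)
    rw [Set.mem_iInter]
    exact propext (summable_prod_Ioo_zero_iff_forall hω)
  rw [measure_congr hUT]
  refine measure_zero_or_one_of_measurableSet_limsup_atTop (fun ℓ => (hY ℓ).comap_le)
    hind.iIndep ?_
  rw [limsup_eq_iInf_iSup_of_nat', MeasurableSpace.measurableSet_iInf]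
  intro N
  rw [← (antitone_setOf_summable_prod_Ioo Y).iInter_nat_add N]
  refine MeasurableSet.iInter fun m => measurableSet_setOf_summable (m := ⨆ i, _) fun k =>
    Finset.measurable_prod _ fun ℓ hℓ => ?_
  obtain ⟨i, rfl⟩ : ∃ i, ℓ = i + N := ⟨ℓ - N, by grind⟩
  exact (comap_measurable _).mono (le_iSup_of_le i le_rfl) le_rfl

lemma map_div_twoPoint {α β : ℝ} (hα : α ≠ 0) (hβ : β ≠ 0) :
    Measure.map (fun x => α * β / x)
        ((1 / 2 : ℝ≥0∞) • Measure.dirac α + (1 / 2 : ℝ≥0∞) • Measure.dirac β)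
      = (1 / 2 : ℝ≥0∞) • Measure.dirac α + (1 / 2 : ℝ≥0∞) • Measure.dirac β := by
  have hr : Measurable fun x : ℝ => α * β / x := by fun_prop
  rw [Measure.map_add _ _ hr, Measure.map_smul, Measure.map_smul, Measure.map_dirac' hr,
    Measure.map_dirac' hr, mul_div_cancel_left₀ β hα, mul_div_cancel_right₀ α hβ, add_comm]

lemma identDistrib_div_of_map_eq_twoPoint {Ω : Type*} [MeasurableSpace Ω] {μ : Measure Ω}
    [IsProbabilityMeasure μ] {α β : ℝ} (hα : α ≠ 0) (hβ : β ≠ 0) {θ : ℕ → Ω → ℝ}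
    (hmeas : ∀ k, Measurable (θ k)) (hindep : iIndepFun θ μ)
    (hlaw : ∀ k, Measure.map (θ k) μ
      = (1 / 2 : ℝ≥0∞) • Measure.dirac α + (1 / 2 : ℝ≥0∞) • Measure.dirac β) :
    IdentDistrib (fun ω ℓ => θ ℓ ω) (fun ω ℓ => α * β / θ ℓ ω) μ μ := by
  have hr : Measurable fun x : ℝ => α * β / x := by fun_prop
  refine IdentDistrib.pi (fun ℓ => ⟨(hmeas ℓ).aemeasurable, (hr.comp (hmeas ℓ)).aemeasurable, ?_⟩)
    hindep (hindep.comp _ fun _ => hr)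
  rw [hlaw, ← map_div_twoPoint hα hβ, ← hlaw, Measure.map_map hr (hmeas ℓ)]
  rfl

/-- If `αβ ≥ 1` with `α, β > 0`, then the random series
`(A_∞*)² = Σ_{k=1}^∞ ∏_{ℓ=1}^{k-1} θ_ℓ²` diverges almost surely, where `(θ_ℓ)` are
i.i.d. uniform on `{α, β}`. -/
theorem stmt_12
    {Ω : Type*} [MeasureSpace Ω] [IsProbabilityMeasure (ℙ : Measure Ω)]
    (α β : ℝ) (hα : 0 < α) (hβ : 0 < β) (hαβ : 1 ≤ α * β)
    (θ : ℕ → Ω → ℝ) (hmeas : ∀ k, Measurable (θ k))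
    (hindep : iIndepFun θ ℙ)
    (hlaw : ∀ k, Measure.map (θ k) ℙ
      = (1 / 2 : ℝ≥0∞) • Measure.dirac α + (1 / 2 : ℝ≥0∞) • Measure.dirac β) :
    ℙ {ω | Summable (fun k : ℕ => ∏ ℓ ∈ Finset.Icc 1 (k - 1), (θ ℓ ω) ^ 2)} = 0 := by
  have hIcc : ∀ k, Finset.Icc 1 (k - 1) = Finset.Ioo 0 k := fun k => by ext; simp; omega
  simp_rw [hIcc]
  have hne : ∀ᵐ ω, ∀ ℓ, θ ℓ ω ≠ 0 := ae_all_iff.2 fun ℓ => by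
    refine (measure_eq_zero_iff_ae_notMem (s := θ ℓ ⁻¹' {0})).1 ?_
    rw [← Measure.map_apply (hmeas ℓ) (measurableSet_singleton 0), hlaw]
    simp [hα.ne', hβ.ne']
  have hhalf : ∀ k, ℙ {ω | ∏ ℓ ∈ Ioo 0 k, θ ℓ ω ^ 2 < 1} ≤ 1 / 2 := fun k =>
    measure_preimage_le_half_of_identDistrib (A := {x : ℕ → ℝ | ∏ ℓ ∈ Ioo 0 k, x ℓ ^ 2 < 1})
      (identDistrib_div_of_map_eq_twoPoint hα.ne' hβ.ne' hmeas hindep hlaw)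
      (measurableSet_lt (by fun_prop) measurable_const) <| by
        filter_upwards [hne] with ω hω hlt hlt'
        have hge := one_le_prod_sq_mul_prod_div_sq (Ioo 0 k) hαβ hω
        have hlt_one := mul_lt_one_of_nonneg_of_lt_one_left (by positivity) hlt hlt'.le
        linarith
  rcases measure_setOf_summable_prod_Ioo_eq_zero_or_one (fun ℓ => (hmeas ℓ).pow_const 2)
    (hindep.comp _ fun _ => measurable_id.pow_const 2) (by simpa using hne) with h | h
  · exact h
  · have hle := h ▸ measure_setOf_summable_le hhalf
    norm_num at hle
end

section
/- Let 0 < β < α, fix p < n, and consider the sets 𝔍_n^k(a) as above for 1 ≤ a ≤ p and k ≥ (n-p)ε. These sets are pairwise disjoint (for distinct pairs (a,k)), disjoint from T_n(2^p), and contained in T_n; consequently #(T_n \ T_n(2^p)) ≥ ε p · #(T_n(2^p) \ B_n^p), where B_n^p = {i ∈ T_n(2^p) : number of ones < ε(n-p)}. -/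
open Finset

/-- `0 ↦ α`, `1 ↦ β`. -/
noncomputable def barv (α β : ℝ) (b : Bool) : ℝ := if b then β else α

/-- `A[i]² = Σ_{k=1}^n ∏_{ℓ=k+1}^n \bar{i_ℓ}²` for a binary string `i` of length `n`. -/
noncomputable def A2 (α β : ℝ) {n : ℕ} (i : Fin n → Bool) : ℝ :=
  ∑ k : Fin n, ∏ ℓ ∈ Finset.univ.filter (fun ℓ : Fin n => k < ℓ), (barv α β (i ℓ)) ^ 2

/-- `T_n = {i ∈ {0,1}^n : A[i] ≥ c^n}`. -/
noncomputable def Tn (α β c : ℝ) (n : ℕ) : Finset (Fin n → Bool) :=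
  Finset.univ.filter (fun i => c ^ n ≤ Real.sqrt (A2 α β i))

/-- `T_n(2^p)`: elements of `T_n` whose first `p+1` coordinates are `(0,…,0,1)`. -/
noncomputable def Tn2p (α β c : ℝ) (n p : ℕ) (hp : p < n) : Finset (Fin n → Bool) :=
  (Tn α β c n).filter
    (fun i => (∀ j : Fin n, (j : ℕ) < p → i j = false) ∧ i ⟨p, hp⟩ = true)

/-- `𝔍_n^k`: elements of `T_n(2^p)` with exactly `k` ones. -/
noncomputable def Jk (α β c : ℝ) (n p : ℕ) (hp : p < n) (k : ℕ) : Finset (Fin n → Bool) :=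
  (Tn2p α β c n p hp).filter
    (fun i => (Finset.univ.filter (fun ℓ => i ℓ = true)).card = k)

/-- `𝔍_n^k(a)`: labels obtained from elements `u` of `𝔍_n^k` by transposing coordinate `a`
with some coordinate `b ∈ {p+1,…,n}` (0-based: `b ≥ p`) where `u_b = 1`. -/
noncomputable def Jka (α β c : ℝ) (n p : ℕ) (hp : p < n) (k : ℕ) (a : Fin n) :
    Finset (Fin n → Bool) :=
  Finset.image (fun x : (Fin n → Bool) × Fin n => x.1 ∘ Equiv.swap a x.2)
    (((Jk α β c n p hp k) ×ˢ Finset.univ).filter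
      (fun x => p ≤ (x.2 : ℕ) ∧ x.1 x.2 = true))

/-- `B_n^p`: elements of `T_n(2^p)` whose number of ones is `< ε(n-p)`. -/
noncomputable def Bnp (α β c ε : ℝ) (n p : ℕ) (hp : p < n) : Finset (Fin n → Bool) :=
  (Tn2p α β c n p hp).filter
    (fun i => ((Finset.univ.filter (fun ℓ => i ℓ = true)).card : ℝ) < ε * ((n : ℝ) - p))

/-!
Swapping a zero at position `a < p` with a one at position `b ≥ p` can only increase `A`: in
the summands of `A[u]²` indexed by `k ≥ a` the factor `β` at `b` becomes `α`, and the other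
summands are merely permuted. So `𝔍_n^k(a)` lies in `T_n`, but outside `T_n(2^p)` since its
labels have a one at `a`. A label of `𝔍_n^k(a)` determines `a` (its only one among the first `p`
coordinates) and `k` (its number of ones), which gives the disjointness. Each `u ∈ 𝔍_n^k` yields
`k` pairs `(u, b)`, and a label has at most `n - p` preimages, one for each `b`; hence
`ε · #𝔍_n^k ≤ k / (n - p) · #𝔍_n^k ≤ #𝔍_n^k(a)` for `k ≥ ε (n - p)`, and summing over `a < p`
and such `k` gives the bound.
-/

lemma barv_sq_le_sq_left {α β : ℝ} (hβα : β ^ 2 ≤ α ^ 2) (x : Bool) : barv α β x ^ 2 ≤ α ^ 2 := by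
  cases x <;> simp [barv, hβα]

lemma A2_le_A2_comp_swap {α β : ℝ} (hβα : β ^ 2 ≤ α ^ 2) {n : ℕ} {u : Fin n → Bool}
    {a b : Fin n} (hab : a < b) (ha : u a = false) : A2 α β u ≤ A2 α β (u ∘ Equiv.swap a b) := by
  refine sum_le_sum fun k _ => ?_
  rcases lt_or_ge k a with hka | hak
  · -- both `a` and `b` lie in `{ℓ | k < ℓ}`, which the swap therefore permutes
    refine (Equiv.Perm.prod_comp (Equiv.swap a b) _ (fun ℓ => barv α β (u ℓ) ^ 2) ?_).ge
    intro ℓ hℓ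
    have := Equiv.swap_apply_ne_self_iff.mp hℓ
    simp only [coe_filter, mem_univ, true_and, Set.mem_ofPred_eq]
    rcases this.2 with rfl | rfl
    · exact hka
    · exact hka.trans hab
  · refine prod_le_prod (fun _ _ => sq_nonneg _) fun ℓ hℓ => ?_
    have hℓa : ℓ ≠ a := ((mem_filter.mp hℓ).2.trans_le' hak).ne'
    rcases eq_or_ne ℓ b with rfl | hℓb
    · simpa [ha, barv] using barv_sq_le_sq_left hβα (u ℓ)
    · simp [Equiv.swap_apply_of_ne_of_ne hℓa hℓb]

section Counting

variable {α β c : ℝ} {n p : ℕ} {hp : p < n} {k : ℕ} {a : Fin n}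

lemma mem_Jka {v : Fin n → Bool} : v ∈ Jka α β c n p hp k a ↔
    ∃ u ∈ Jk α β c n p hp k, ∃ b : Fin n, p ≤ (b : ℕ) ∧ u b = true ∧ u ∘ Equiv.swap a b = v := by
  simp [Jka, and_assoc]

lemma apply_eq_true_of_mem_Jka {v : Fin n → Bool} (hv : v ∈ Jka α β c n p hp k a) :
    v a = true := by
  obtain ⟨u, -, b, -, hub, rfl⟩ := mem_Jka.mp hv
  simpa using hub

lemma apply_eq_false_of_mem_Jka {v : Fin n → Bool} (hv : v ∈ Jka α β c n p hp k a) {j : Fin n}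
    (hj : (j : ℕ) < p) (hja : j ≠ a) : v j = false := by
  obtain ⟨u, hu, b, hpb, -, rfl⟩ := mem_Jka.mp hv
  have hjb : j ≠ b := by rintro rfl; omega
  simpa [Equiv.swap_apply_of_ne_of_ne hja hjb] using (mem_filter.mp (mem_filter.mp hu).1).2.1 j hj

lemma card_ones_of_mem_Jka {v : Fin n → Bool} (hv : v ∈ Jka α β c n p hp k a) :
    #{ℓ | v ℓ = true} = k := by
  obtain ⟨u, hu, b, -, -, rfl⟩ := mem_Jka.mp hv
  exact (card_equiv (Equiv.swap a b) (by simp)).trans (mem_filter.mp hu).2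

lemma Jka_subset_Tn (hβα : β ^ 2 ≤ α ^ 2) (ha : (a : ℕ) < p) :
    Jka α β c n p hp k a ⊆ Tn α β c n := by
  intro v hv
  obtain ⟨u, hu, b, hpb, -, rfl⟩ := mem_Jka.mp hv
  obtain ⟨huT, hu0, -⟩ := mem_filter.mp (mem_filter.mp hu).1
  have hab : a < b := Fin.lt_def.mpr (ha.trans_le hpb)
  simp only [Tn, mem_filter, mem_univ, true_and] at huT ⊢
  exact huT.trans (Real.sqrt_le_sqrt (A2_le_A2_comp_swap hβα hab (hu0 a ha)))

lemma disjoint_Jka_Tn2p (ha : (a : ℕ) < p) :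
    Disjoint (Jka α β c n p hp k a) (Tn2p α β c n p hp) :=
  disjoint_left.mpr fun _ hv hv' => by
    simpa [apply_eq_true_of_mem_Jka hv] using (mem_filter.mp hv').2.1 a ha

lemma disjoint_Jka {k' : ℕ} {a' : Fin n} (ha : (a : ℕ) < p) (hne : (a, k) ≠ (a', k')) :
    Disjoint (Jka α β c n p hp k a) (Jka α β c n p hp k' a') := by
  refine disjoint_left.mpr fun _ hv hv' => hne ?_
  have haa : a = a' := by
    by_contra h
    simpa [apply_eq_true_of_mem_Jka hv] using apply_eq_false_of_mem_Jka hv' ha h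
  rw [haa, ← card_ones_of_mem_Jka hv, card_ones_of_mem_Jka hv']

noncomputable def JkPairs (α β c : ℝ) (n p : ℕ) (hp : p < n) (k : ℕ) :
    Finset ((Fin n → Bool) × Fin n) :=
  {x ∈ Jk α β c n p hp k ×ˢ univ | p ≤ (x.2 : ℕ) ∧ x.1 x.2 = true}

lemma card_JkPairs : #(JkPairs α β c n p hp k) = #(Jk α β c n p hp k) * k := by
  rw [JkPairs, card_filter, sum_product]
  refine sum_const_nat fun u hu => ?_
  simp only [Jk, Tn2p, mem_filter] at hu
  obtain ⟨⟨-, hu0, -⟩, hk⟩ := hu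
  rw [← hk, ← card_filter]
  -- every one of `u` sits at a position `≥ p`
  refine congrArg card (filter_congr fun b _ => and_iff_right_of_imp fun hub => ?_)
  by_contra! hb
  simp [hu0 b hb] at hub

lemma card_JkPairs_fiber_le (v : Fin n → Bool) :
    #{x ∈ JkPairs α β c n p hp k | x.1 ∘ Equiv.swap a x.2 = v} ≤ n - p := by
  rw [← Fin.card_Ici ⟨p, hp⟩]
  refine card_le_card_of_injOn Prod.snd (fun x hx => ?_) fun x hx y hy hxy => ?_
  · simpa [Fin.le_def] using (mem_filter.mp (mem_filter.mp hx).1).2.1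
  · -- the transposition `b` determines the preimage `v ∘ swap a b`
    have hx1 : x.1 = v ∘ Equiv.swap a x.2 := by rw [← (mem_filter.mp hx).2]; ext; simp
    have hy1 : y.1 = v ∘ Equiv.swap a y.2 := by rw [← (mem_filter.mp hy).2]; ext; simp
    exact Prod.ext (by rw [hx1, hy1, hxy]) hxy

lemma mul_card_Jk_le_card_Jka :
    k * #(Jk α β c n p hp k) ≤ (n - p) * #(Jka α β c n p hp k a) := by
  have := card_le_mul_card_image (JkPairs α β c n p hp k) (n - p) fun v _ =>
    card_JkPairs_fiber_le (a := a) v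
  rwa [card_JkPairs, mul_comm] at this

lemma mul_card_Jk_le_card_Jka_of_le {ε : ℝ} (hk : ((n : ℝ) - p) * ε ≤ k) :
    ε * #(Jk α β c n p hp k) ≤ #(Jka α β c n p hp k a) := by
  have hnp : (0 : ℝ) < n - p := sub_pos.mpr (Nat.cast_lt.mpr hp)
  have hnat : (k : ℝ) * #(Jk α β c n p hp k) ≤ (n - p) * #(Jka α β c n p hp k a) := by
    have := mul_card_Jk_le_card_Jka (α := α) (β := β) (c := c) (hp := hp) (k := k) (a := a)
    have hcast := Nat.cast_le (α := ℝ).mpr this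
    push_cast [Nat.cast_sub hp.le] at hcast
    exact hcast
  refine le_of_mul_le_mul_left ?_ hnp
  calc ((n : ℝ) - p) * (ε * #(Jk α β c n p hp k))
      = ((n : ℝ) - p) * ε * #(Jk α β c n p hp k) := by ring
    _ ≤ k * #(Jk α β c n p hp k) := by gcongr
    _ ≤ (n - p) * #(Jka α β c n p hp k a) := hnat

lemma sum_card_Jka_le (hβα : β ^ 2 ≤ α ^ 2) (s : Finset ℕ) :
    ∑ x ∈ Iio (⟨p, hp⟩ : Fin n) ×ˢ s, #(Jka α β c n p hp x.2 x.1) ≤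
      #(Tn α β c n \ Tn2p α β c n p hp) := by
  rw [← card_biUnion]
  · refine card_le_card fun v hv => ?_
    obtain ⟨x, hx, hv⟩ := mem_biUnion.mp hv
    have ha : (x.1 : ℕ) < p := by simpa [Fin.lt_def] using (mem_product.mp hx).1
    exact mem_sdiff.mpr ⟨Jka_subset_Tn hβα ha hv, disjoint_left.mp (disjoint_Jka_Tn2p ha) hv⟩
  · intro x hx y _ hxy
    exact disjoint_Jka (by simpa [Fin.lt_def] using (mem_product.mp hx).1) (by simpa using hxy)

lemma disjoint_Jk {k' : ℕ} (hk : k ≠ k') :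
    Disjoint (Jk α β c n p hp k) (Jk α β c n p hp k') :=
  disjoint_left.mpr fun _ hu hu' => hk ((mem_filter.mp hu).2.symm.trans (mem_filter.mp hu').2)

lemma Tn2p_sdiff_Bnp_eq_biUnion (ε : ℝ) :
    Tn2p α β c n p hp \ Bnp α β c ε n p hp =
      {k ∈ range (n + 1) | ((n : ℝ) - p) * ε ≤ (k : ℕ)}.biUnion (Jk α β c n p hp) := by
  ext i
  simp only [Bnp, Jk, mem_sdiff, mem_filter, mem_biUnion, mem_range, not_and, not_lt]
  constructor
  · rintro ⟨hi, hbig⟩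
    exact ⟨_, ⟨Nat.lt_succ_of_le ((card_filter_le _ _).trans_eq (card_fin n)),
      by linarith [hbig hi]⟩, hi, rfl⟩
  · rintro ⟨k, ⟨-, hk⟩, hi, rfl⟩
    exact ⟨hi, fun _ => by linarith⟩

theorem mul_card_Tn2p_sdiff_Bnp_le (hβα : β ^ 2 ≤ α ^ 2) (ε : ℝ) :
    ε * p * #(Tn2p α β c n p hp \ Bnp α β c ε n p hp) ≤ #(Tn α β c n \ Tn2p α β c n p hp) := by
  set K := {k ∈ range (n + 1) | ((n : ℝ) - p) * ε ≤ (k : ℕ)}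
  calc ε * p * #(Tn2p α β c n p hp \ Bnp α β c ε n p hp)
      = ∑ x ∈ Iio (⟨p, hp⟩ : Fin n) ×ˢ K, ε * #(Jk α β c n p hp x.2) := by
        rw [Tn2p_sdiff_Bnp_eq_biUnion, card_biUnion fun _ _ _ _ => disjoint_Jk, sum_product]
        simp only [sum_const, Fin.card_Iio, nsmul_eq_mul, ← mul_sum]
        push_cast
        ring
    _ ≤ ∑ x ∈ Iio (⟨p, hp⟩ : Fin n) ×ˢ K, (#(Jka α β c n p hp x.2 x.1) : ℝ) := by
        refine sum_le_sum fun x hx => mul_card_Jk_le_card_Jka_of_le ?_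
        exact (mem_filter.mp (mem_product.mp hx).2).2
    _ ≤ #(Tn α β c n \ Tn2p α β c n p hp) := by
        rw [← Nat.cast_sum]
        exact Nat.cast_le.mpr (sum_card_Jka_le hβα K)

end Counting

theorem stmt_14_general (α β c ε : ℝ) (hβ : 0 < β) (hβα : β < α)
    (n p : ℕ) (hp : p < n) :
    (∀ (a a' : Fin n) (k k' : ℕ), (a : ℕ) < p → (a' : ℕ) < p →
      ((n : ℝ) - p) * ε ≤ (k : ℝ) → ((n : ℝ) - p) * ε ≤ (k' : ℝ) →
      (a, k) ≠ (a', k') →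
      Disjoint (Jka α β c n p hp k a) (Jka α β c n p hp k' a')) ∧
    (∀ (a : Fin n) (k : ℕ), (a : ℕ) < p → ((n : ℝ) - p) * ε ≤ (k : ℝ) →
      Disjoint (Jka α β c n p hp k a) (Tn2p α β c n p hp)) ∧
    (∀ (a : Fin n) (k : ℕ), (a : ℕ) < p → ((n : ℝ) - p) * ε ≤ (k : ℝ) →
      Jka α β c n p hp k a ⊆ Tn α β c n) ∧
    ε * (p : ℝ) * (((Tn2p α β c n p hp) \ (Bnp α β c ε n p hp)).card : ℝ)
      ≤ (((Tn α β c n) \ (Tn2p α β c n p hp)).card : ℝ) := by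
  have hβα_sq : β ^ 2 ≤ α ^ 2 := pow_le_pow_left₀ hβ.le hβα.le 2
  exact ⟨fun _ _ _ _ ha _ _ _ hne => disjoint_Jka ha hne,
    fun _ _ ha _ => disjoint_Jka_Tn2p ha,
    fun _ _ ha _ => Jka_subset_Tn hβα_sq ha,
    mul_card_Tn2p_sdiff_Bnp_le hβα_sq ε⟩

/-- The sets `𝔍_n^k(a)` for `1 ≤ a ≤ p`, `k ≥ (n-p)ε` are pairwise disjoint, disjoint from
`T_n(2^p)`, contained in `T_n`; consequently
`#(T_n \ T_n(2^p)) ≥ ε p · #(T_n(2^p) \ B_n^p)`. -/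
theorem stmt_14 (α β c ε : ℝ) (hβ : 0 < β) (hβα : β < α) (hε : 0 < ε)
    (n p : ℕ) (hp : p < n) :
    (∀ (a a' : Fin n) (k k' : ℕ), (a : ℕ) < p → (a' : ℕ) < p →
      ((n : ℝ) - p) * ε ≤ (k : ℝ) → ((n : ℝ) - p) * ε ≤ (k' : ℝ) →
      (a, k) ≠ (a', k') →
      Disjoint (Jka α β c n p hp k a) (Jka α β c n p hp k' a')) ∧
    (∀ (a : Fin n) (k : ℕ), (a : ℕ) < p → ((n : ℝ) - p) * ε ≤ (k : ℝ) →
      Disjoint (Jka α β c n p hp k a) (Tn2p α β c n p hp)) ∧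
    (∀ (a : Fin n) (k : ℕ), (a : ℕ) < p → ((n : ℝ) - p) * ε ≤ (k : ℝ) →
      Jka α β c n p hp k a ⊆ Tn α β c n) ∧
    ε * (p : ℝ) * (((Tn2p α β c n p hp) \ (Bnp α β c ε n p hp)).card : ℝ)
      ≤ (((Tn α β c n) \ (Tn2p α β c n p hp)).card : ℝ) :=
  stmt_14_general α β c ε hβ hβα n p hp
end
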